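/- Let (V, E, c) be a connected infinite network with conductance function c, and H_E the energy Hilbert space with ‖u‖² = (1/2)Σ_{(xy)∈E} c_{xy}|u(x)-u(y)|². Fix a base point o ∈ V. Then for every x ∈ V there exists a unique dipole v_x ∈ H_E such that f(x) - f(o) = ⟨v_x, f⟩_{H_E} for all f ∈ H_E. -/

import Mathlib

/-! The gradient `∇u = (√c_{xy} (u x - u y))_{(x,y)}` sends finite-energy functions into
`ℓ²(V × V)`, with `energyInner c u f = ⟪∇u, ∇f⟫ / 2`. Summing along a path from `o` to `x` gives
`|f x - f o| ≤ C ‖∇f‖`. This bound makes the range of `∇` closed (normalized potentials converge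
pointwise, and their limit has the limiting gradient) and makes `∇f ↦ f x - f o` a well-defined
bounded functional on it, so the Riesz representation theorem in this Hilbert space gives `g`
with `⟪∇g, ∇f⟫ = f x - f o`, and `v_x = 2g`. Two representers have equal gradients, and on a
connected network equal gradients means equal up to a constant. -/

section Network

variable {V : Type*}

/-- The energy `‖u‖²_{H_E} = (1/2) Σ_{(xy)} c_{xy} |u(x) - u(y)|²` of a function on the
vertices of a network with conductance `c` (valued in `ℝ≥0∞`, so finiteness makes sense). -/
noncomputable def energy (c : V → V → ℝ) (u : V → ℂ) : ENNReal :=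
  (∑' p : V × V, ENNReal.ofReal (c p.1 p.2 * ‖u p.1 - u p.2‖ ^ 2)) / 2

/-- The energy inner product
`⟨u, v⟩_{H_E} = (1/2) Σ_{(xy)} c_{xy} (conj(u x) - conj(u y)) (v x - v y)`. -/
noncomputable def energyInner (c : V → V → ℝ) (u v : V → ℂ) : ℂ :=
  (1 / 2) * ∑' p : V × V,
    (c p.1 p.2 : ℂ) * (starRingEnd ℂ) (u p.1 - u p.2) * (v p.1 - v p.2)

open scoped InnerProductSpace Topology
open Filter

theorem Fin.norm_last_sub_zero_le_sum {E : Type*} [SeminormedAddCommGroup E] {n : ℕ}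
    (f : Fin (n + 1) → E) :
    ‖f (Fin.last n) - f 0‖ ≤ ∑ i : Fin n, ‖f i.succ - f i.castSucc‖ := by
  induction n with
  | zero => simp
  | succ n ih =>
    rw [Fin.sum_univ_castSucc]
    calc ‖f (Fin.last (n + 1)) - f 0‖
        ≤ ‖f (Fin.last n).castSucc - f 0‖
            + ‖f (Fin.last n).succ - f (Fin.last n).castSucc‖ :=
          (norm_sub_le_norm_sub_add_norm_sub _ _ _).trans_eq (add_comm _ _)
      _ ≤ _ := by
          gcongr
          simpa only [Function.comp_apply, Fin.succ_castSucc, Fin.castSucc_zero] using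
            ih (f ∘ Fin.castSucc)

namespace Network

variable (c : V → V → ℝ)

def Connected : Prop :=
  ∀ x y, ∃ (n : ℕ) (γ : Fin (n + 1) → V), γ 0 = x ∧ γ (Fin.last n) = y ∧
    ∀ i : Fin n, c (γ i.castSucc) (γ i.succ) ≠ 0

noncomputable def grad : (V → ℂ) →ₗ[ℂ] V × V → ℂ where
  toFun u p := (√(c p.1 p.2) : ℂ) * (u p.1 - u p.2)
  map_add' u v := by ext p; simp only [Pi.add_apply]; ring
  map_smul' a u := by ext p; simp only [Pi.smul_apply, smul_eq_mul, RingHom.id_apply]; ring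

lemma grad_apply (u : V → ℂ) (p : V × V) :
    grad c u p = (√(c p.1 p.2) : ℂ) * (u p.1 - u p.2) := rfl

lemma norm_grad_apply (u : V → ℂ) (p : V × V) :
    ‖grad c u p‖ = √(c p.1 p.2) * ‖u p.1 - u p.2‖ := by
  rw [grad_apply, norm_mul, Complex.norm_real, Real.norm_of_nonneg (Real.sqrt_nonneg _)]

lemma energy_lt_top_iff_memℓp (hnonneg : ∀ x y, 0 ≤ c x y) (u : V → ℂ) :
    energy c u < ⊤ ↔ Memℓp (grad c u) 2 := by
  have hsq (p : V × V) : c p.1 p.2 * ‖u p.1 - u p.2‖ ^ 2 = ‖grad c u p‖ ^ 2 := by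
    rw [norm_grad_apply, mul_pow, Real.sq_sqrt (hnonneg _ _)]
  have hnn (p : V × V) : 0 ≤ ‖grad c u p‖ ^ 2 := by positivity
  rw [memℓp_gen_iff (by norm_num), ENNReal.toReal_ofNat]
  simp only [Real.rpow_two, energy, hsq, lt_top_iff_ne_top, Ne, ENNReal.div_eq_top,
    OfNat.ofNat_ne_zero, and_false, false_or, ENNReal.ofNat_ne_top, not_false_eq_true, and_true]
  refine ⟨fun h => ?_, fun h => h.tsum_ofReal_ne_top⟩
  simpa only [ENNReal.toReal_ofReal (hnn _)] using ENNReal.summable_toReal h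

noncomputable def finiteEnergy : Submodule ℂ (V → ℂ) where
  carrier := {u | Memℓp (grad c u) 2}
  add_mem' {u v} hu hv := by simpa only [Set.mem_ofPred_eq, map_add] using hu.add hv
  zero_mem' := by simpa only [Set.mem_ofPred_eq, map_zero] using zero_memℓp
  smul_mem' a u hu := by simpa only [Set.mem_ofPred_eq, map_smul] using hu.const_smul a

noncomputable def gradL : finiteEnergy c →ₗ[ℂ] lp (fun _ : V × V => ℂ) 2 where
  toFun u := ⟨grad c (u : V → ℂ), u.2⟩
  map_add' u v := lp.ext (map_add (grad c) (u : V → ℂ) v)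
  map_smul' a u := lp.ext (map_smul (grad c) a (u : V → ℂ))

lemma coe_gradL (u : finiteEnergy c) : ⇑(gradL c u) = grad c (u : V → ℂ) := rfl

lemma energyInner_eq_inner (hnonneg : ∀ x y, 0 ≤ c x y) (u f : finiteEnergy c) :
    energyInner c u f = 1 / 2 * ⟪gradL c u, gradL c f⟫_ℂ := by
  rw [energyInner, lp.inner_eq_tsum]
  congr 1
  refine tsum_congr fun p => ?_
  have hc : (c p.1 p.2 : ℂ) = (√(c p.1 p.2) : ℂ) * (√(c p.1 p.2) : ℂ) := by
    rw [← Complex.ofReal_mul, Real.mul_self_sqrt (hnonneg _ _)]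
  rw [RCLike.inner_apply, coe_gradL, coe_gradL, grad_apply, grad_apply, map_mul,
    Complex.conj_ofReal, hc]
  ring

lemma norm_sub_le_of_ne_zero (hnonneg : ∀ x y, 0 ≤ c x y) (u : finiteEnergy c) {a b : V}
    (hab : c a b ≠ 0) :
    ‖(u : V → ℂ) a - (u : V → ℂ) b‖ ≤ (√(c a b))⁻¹ * ‖gradL c u‖ := by
  have hpos : 0 < √(c a b) := Real.sqrt_pos.2 ((hnonneg a b).lt_of_ne' hab)
  rw [← div_eq_inv_mul, le_div_iff₀' hpos]
  simpa only [coe_gradL, norm_grad_apply] using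
    lp.norm_apply_le_norm two_ne_zero (gradL c u) (a, b)

lemma exists_norm_sub_le (hnonneg : ∀ x y, 0 ≤ c x y) (hconn : Connected c) (a b : V) :
    ∃ C, ∀ u : finiteEnergy c, ‖(u : V → ℂ) b - (u : V → ℂ) a‖ ≤ C * ‖gradL c u‖ := by
  obtain ⟨n, γ, rfl, rfl, hγ⟩ := hconn a b
  refine ⟨∑ i : Fin n, (√(c (γ i.castSucc) (γ i.succ)))⁻¹, fun u => ?_⟩
  calc ‖(u : V → ℂ) (γ (Fin.last n)) - (u : V → ℂ) (γ 0)‖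
      ≤ ∑ i : Fin n, ‖(u : V → ℂ) (γ i.succ) - (u : V → ℂ) (γ i.castSucc)‖ :=
        Fin.norm_last_sub_zero_le_sum ((u : V → ℂ) ∘ γ)
    _ ≤ ∑ i : Fin n, (√(c (γ i.castSucc) (γ i.succ)))⁻¹ * ‖gradL c u‖ := by
        gcongr with i
        rw [norm_sub_rev]
        exact norm_sub_le_of_ne_zero c hnonneg u (hγ i)
    _ = _ := (Finset.sum_mul ..).symm

lemma apply_eq_of_gradL_eq_zero (hnonneg : ∀ x y, 0 ≤ c x y) (hconn : Connected c)
    {u : finiteEnergy c} (hu : gradL c u = 0) (a b : V) :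
    (u : V → ℂ) a = (u : V → ℂ) b := by
  obtain ⟨C, hC⟩ := exists_norm_sub_le c hnonneg hconn b a
  simpa [hu, sub_eq_zero] using hC u

lemma exists_potentialDiff (hnonneg : ∀ x y, 0 ≤ c x y) (hconn : Connected c) (a b : V) :
    ∃ L : LinearMap.range (gradL c) →L[ℂ] ℂ,
      ∀ u : finiteEnergy c, L ⟨gradL c u, u, rfl⟩ = (u : V → ℂ) b - (u : V → ℂ) a := by
  let evalSub : finiteEnergy c →ₗ[ℂ] ℂ :=
    (LinearMap.proj (R := ℂ) (φ := fun _ : V => ℂ) b - LinearMap.proj a).comp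
      (finiteEnergy c).subtype
  have hker : LinearMap.ker (gradL c) ≤ LinearMap.ker evalSub := fun u hu => by
    simp [evalSub, apply_eq_of_gradL_eq_zero c hnonneg hconn hu b a]
  let L : LinearMap.range (gradL c) →ₗ[ℂ] ℂ :=
    ((LinearMap.ker (gradL c)).liftQ evalSub hker).comp
      (gradL c).quotKerEquivRange.symm.toLinearMap
  have hL (u : finiteEnergy c) :
      L ⟨gradL c u, u, rfl⟩ = (u : V → ℂ) b - (u : V → ℂ) a := by
    rw [LinearMap.comp_apply, LinearEquiv.coe_coe, (LinearEquiv.symm_apply_eq _).2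
      (Subtype.ext (LinearMap.quotKerEquivRange_apply_mk (gradL c) u).symm)]
    rfl
  obtain ⟨C, hC⟩ := exists_norm_sub_le c hnonneg hconn a b
  refine ⟨L.mkContinuous C ?_, hL⟩
  rintro ⟨-, u, rfl⟩
  rw [hL]
  exact hC u

lemma isClosed_range_gradL [Nonempty V] (hnonneg : ∀ x y, 0 ≤ c x y) (hconn : Connected c) :
    IsClosed (LinearMap.range (gradL c) : Set (lp (fun _ : V × V => ℂ) 2)) := by
  let a : V := Classical.arbitrary V
  refine isClosed_of_closure_subset fun w hw => ?_
  obtain ⟨s, hsS, hsw⟩ := mem_closure_iff_seq_limit.1 hw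
  choose u hu using hsS
  let t : ℕ → LinearMap.range (gradL c) := fun n => ⟨gradL c (u n), u n, rfl⟩
  have ht : CauchySeq t := by
    refine isUniformEmbedding_subtype_val.isUniformInducing.cauchy_map_iff.1 ?_
    rw [Filter.map_map, show Subtype.val ∘ t = s from funext hu]
    exact hsw.cauchySeq
  choose L hL using exists_potentialDiff c hnonneg hconn a
  have hG (z : V) : ∃ G, Tendsto (fun n => (u n : V → ℂ) z - (u n : V → ℂ) a) atTop (𝓝 G) :=
    cauchySeq_tendsto_of_complete <| by
      simpa only [Function.comp_def, t, hL] using (L z).uniformContinuous.comp_cauchySeq ht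
  choose G hG using hG
  have hgrad : grad c G = w := by
    ext p
    refine tendsto_nhds_unique ?_
      (((lp.lipschitzWith_one_eval 2 p).continuous.tendsto w).comp hsw)
    have : Tendsto (fun n => grad c (u n : V → ℂ) p) atTop (𝓝 (grad c G p)) := by
      simpa only [grad_apply, sub_sub_sub_cancel_right] using
        ((hG p.1).sub (hG p.2)).const_mul _
    simpa only [← hu, Function.comp_def, coe_gradL] using this
  exact ⟨⟨G, show Memℓp (grad c G) 2 from hgrad ▸ w.2⟩, lp.ext hgrad⟩

lemma exists_inner_gradL_eq (hnonneg : ∀ x y, 0 ≤ c x y) (hconn : Connected c) (a b : V) :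
    ∃ g : finiteEnergy c, ∀ f : finiteEnergy c,
      ⟪gradL c g, gradL c f⟫_ℂ = (f : V → ℂ) b - (f : V → ℂ) a := by
  have : Nonempty V := ⟨a⟩
  have : CompleteSpace (LinearMap.range (gradL c)) :=
    (isClosed_range_gradL c hnonneg hconn).completeSpace_coe
  obtain ⟨L, hL⟩ := exists_potentialDiff c hnonneg hconn a b
  obtain ⟨⟨-, g, rfl⟩, hg⟩ := (InnerProductSpace.toDual ℂ _).surjective L
  refine ⟨g, fun f => ?_⟩
  rw [← hL, ← hg, InnerProductSpace.toDual_apply_apply, Submodule.coe_inner]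

lemma gradL_eq_of_energyInner_eq (hnonneg : ∀ x y, 0 ≤ c x y) {v w : finiteEnergy c}
    (h : ∀ f : finiteEnergy c, energyInner c v f = energyInner c w f) :
    gradL c v = gradL c w := by
  have h' := h (v - w)
  rw [energyInner_eq_inner c hnonneg, energyInner_eq_inner c hnonneg,
    mul_right_inj' (by norm_num), ← sub_eq_zero, ← inner_sub_left, ← map_sub] at h'
  rwa [← sub_eq_zero, ← map_sub, ← inner_self_eq_zero (𝕜 := ℂ)]

end Network

open Network in
theorem stmt18_general (c : V → V → ℝ)
    (hnonneg : ∀ x y, 0 ≤ c x y)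
    (hconn : ∀ x y, ∃ (n : ℕ) (γ : Fin (n + 1) → V), γ 0 = x ∧ γ (Fin.last n) = y ∧
      ∀ i : Fin n, c (γ i.castSucc) (γ i.succ) ≠ 0)
    (o x : V) :
    ∃ v : V → ℂ, energy c v < ⊤ ∧
      (∀ f : V → ℂ, energy c f < ⊤ → f x - f o = energyInner c v f) ∧
      ∀ w : V → ℂ,
        (energy c w < ⊤ ∧ ∀ f : V → ℂ, energy c f < ⊤ → f x - f o = energyInner c w f) →
        ∃ k : ℂ, ∀ z, w z = v z + k := by
  have hE (u : V → ℂ) : energy c u < ⊤ ↔ u ∈ finiteEnergy c :=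
    energy_lt_top_iff_memℓp c hnonneg u
  obtain ⟨g, hg⟩ := exists_inner_gradL_eq c hnonneg hconn o x
  let v : finiteEnergy c := (2 : ℂ) • g
  have hv (f : finiteEnergy c) : (f : V → ℂ) x - (f : V → ℂ) o = energyInner c v f := by
    rw [energyInner_eq_inner c hnonneg, map_smul, inner_smul_left, hg, Complex.conj_ofNat]
    ring
  refine ⟨v, (hE v).2 v.2, fun f hf => hv ⟨f, (hE f).1 hf⟩, ?_⟩
  rintro w ⟨hw, hwv⟩
  let w' : finiteEnergy c := ⟨w, (hE w).1 hw⟩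
  have hgrad : gradL c (w' - v) = 0 := by
    rw [map_sub, sub_eq_zero]
    exact gradL_eq_of_energyInner_eq c hnonneg fun f =>
      (hwv f ((hE f).2 f.2)).symm.trans (hv f)
  refine ⟨w o - (v : V → ℂ) o, fun z => ?_⟩
  have hconst := apply_eq_of_gradL_eq_zero c hnonneg hconn hgrad z o
  simp only [Submodule.coe_sub, Pi.sub_apply, w'] at hconst
  linear_combination hconst

/-- in a connected network `(V, E, c)` (countably infinite vertex set, finite
degrees, symmetric positive conductances on edges) with base point `o`, for every `x ∈ V`
there is a dipole `v_x` of finite energy with `f(x) - f(o) = ⟨v_x, f⟩_{H_E}` for all finite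
energy `f`, unique as an element of `H_E` (i.e. unique up to an additive constant). -/
theorem stmt18 [Countable V] [Infinite V] (c : V → V → ℝ)
    (hsymm : ∀ x y, c x y = c y x) (hnonneg : ∀ x y, 0 ≤ c x y) (hdiag : ∀ x, c x x = 0)
    (hfin : ∀ x, {y | c x y ≠ 0}.Finite)
    (hconn : ∀ x y, ∃ (n : ℕ) (γ : Fin (n + 1) → V), γ 0 = x ∧ γ (Fin.last n) = y ∧
      ∀ i : Fin n, c (γ i.castSucc) (γ i.succ) ≠ 0)
    (o x : V) :
    ∃ v : V → ℂ, energy c v < ⊤ ∧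
      (∀ f : V → ℂ, energy c f < ⊤ → f x - f o = energyInner c v f) ∧
      ∀ w : V → ℂ,
        (energy c w < ⊤ ∧ ∀ f : V → ℂ, energy c f < ⊤ → f x - f o = energyInner c w f) →
        ∃ k : ℂ, ∀ z, w z = v z + k :=
  stmt18_general c hnonneg hconn o x

end Network
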